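/- Let Z = {z_1, …, z_n} ⊂ ℝ^d be an almost regular simplex, i.e., a set realizing an almost regular matrix: the distances α_{ij} = ‖z_i − z_j‖ are positive for i ≠ j and satisfy ∑_{1 ≤ i < j ≤ n} (α_max² − α_{ij}²) < α_max², where α_max = max_{i,j} α_{ij}. Then for every integer m ≥ 2 there exists an m-regular polygonal torus T (a finite product of regular m-gons, possibly of different circumradii) such that Z embeds isometrically into T. -/

import Mathlib

/-!
Write the squared distances as a positive combination `∑_S w_S δ_S` of cut semimetrics. Each cut
`S` becomes one factor of the torus: an `m`-gon whose circumradius makes two adjacent vertices lie at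
distance `√w_S`, the points of `S` sitting on one of them and the other points on the next one.
Squared distances add up in a product, so this is an isometry. Almost regularity is what makes
singletons and pairs suffice as cuts: with `γ_ij = α_max² - d_ij²`, the pair `{i, j}` gets weight
`(γ_ij + ε) / 2` and the singleton `{i}` what is left of `(α_max² + ε) / 2`, which stays positive
because `∑ γ < α_max²`.
-/

open scoped Classical

noncomputable section

/-- The `j`-th vertex of a regular `m`-gon in the Euclidean plane with center `c`,
circumradius `r` and angle `θ`. -/
def polygonVertex (c : EuclideanSpace ℝ (Fin 2)) (r θ : ℝ) (m j : ℕ) :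
    EuclideanSpace ℝ (Fin 2) :=
  (WithLp.equiv 2 (Fin 2 → ℝ)).symm
    ![c 0 + r * Real.cos (2 * Real.pi * j / m + θ),
      c 1 + r * Real.sin (2 * Real.pi * j / m + θ)]

/-- `T` is (the vertex set of) a regular `m`-gon of circumradius `r` in the plane. -/
def IsRegularPolygon (m : ℕ) (r : ℝ) (T : Set (EuclideanSpace ℝ (Fin 2))) : Prop :=
  2 ≤ m ∧ 0 < r ∧
    ∃ (c : EuclideanSpace ℝ (Fin 2)) (θ : ℝ),
      T = {p | ∃ j < m, p = polygonVertex c r θ m j}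

/-- The Cartesian product of `n` planar sets, viewed inside `ℝ^{2n}`. -/
def toriProduct {n : ℕ} (T : Fin n → Set (EuclideanSpace ℝ (Fin 2))) :
    Set (EuclideanSpace ℝ (Fin n × Fin 2)) :=
  {x | ∀ i : Fin n, ((WithLp.equiv 2 (Fin 2 → ℝ)).symm fun j => x (i, j)) ∈ T i}

open Finset

lemma dist_polygonVertex_sq (c : EuclideanSpace ℝ (Fin 2)) (r θ : ℝ) (m j k : ℕ) :
    dist (polygonVertex c r θ m j) (polygonVertex c r θ m k) ^ 2
      = 2 * r ^ 2 * (1 - Real.cos (2 * Real.pi * j / m - 2 * Real.pi * k / m)) := by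
  rw [EuclideanSpace.dist_eq, Real.sq_sqrt (by positivity), Fin.sum_univ_two]
  simp only [polygonVertex, WithLp.equiv_symm_apply, Real.dist_eq, sq_abs,
    Matrix.cons_val_zero, Matrix.cons_val_one]
  have hj := Real.sin_sq_add_cos_sq (2 * Real.pi * j / m + θ)
  have hk := Real.sin_sq_add_cos_sq (2 * Real.pi * k / m + θ)
  have hc := Real.cos_sub (2 * Real.pi * j / m + θ) (2 * Real.pi * k / m + θ)
  rw [show 2 * Real.pi * j / m + θ - (2 * Real.pi * k / m + θ)
    = 2 * Real.pi * j / m - 2 * Real.pi * k / m by ring] at hc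
  linear_combination r ^ 2 * hj + r ^ 2 * hk + 2 * r ^ 2 * hc

lemma one_sub_cos_two_pi_div_pos {m : ℕ} (hm : 2 ≤ m) :
    0 < 1 - Real.cos (2 * Real.pi / m) := by
  have hm' : (2 : ℝ) ≤ m := by exact_mod_cast hm
  have hle : 2 * Real.pi / m ≤ Real.pi := by
    rw [div_le_iff₀ (by linarith)]
    nlinarith [Real.pi_pos]
  have hlt := Real.cos_lt_cos_of_nonneg_of_le_pi le_rfl hle (by positivity)
  rw [Real.cos_zero] at hlt
  linarith

lemma exists_radius_dist_polygonVertex_zero_one_sq {m : ℕ} (hm : 2 ≤ m) {δ : ℝ} (hδ : 0 < δ)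
    (c : EuclideanSpace ℝ (Fin 2)) (θ : ℝ) :
    ∃ r > 0, dist (polygonVertex c r θ m 0) (polygonVertex c r θ m 1) ^ 2 = δ := by
  have hcos := one_sub_cos_two_pi_div_pos hm
  refine ⟨Real.sqrt (δ / (2 * (1 - Real.cos (2 * Real.pi / m)))), by positivity, ?_⟩
  rw [dist_polygonVertex_sq, Real.sq_sqrt (by positivity)]
  simp only [Nat.cast_zero, Nat.cast_one, mul_zero, zero_div, mul_one, zero_sub, Real.cos_neg]
  field_simp

lemma EuclideanSpace.dist_sq_eq_sum_dist_sq_curry {ι κ : Type*} [Fintype ι] [Fintype κ]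
    (x y : EuclideanSpace ℝ (ι × κ)) :
    dist x y ^ 2
      = ∑ i, dist (WithLp.toLp 2 fun k => x (i, k)) (WithLp.toLp 2 fun k => y (i, k)) ^ 2 := by
  rw [EuclideanSpace.dist_eq, Real.sq_sqrt (by positivity), Fintype.sum_prod_type]
  refine Fintype.sum_congr _ _ fun i => ?_
  rw [EuclideanSpace.dist_eq, Real.sq_sqrt (by positivity)]

section Cuts

variable {ι : Type*}

def cutSemimetric (S : Set ι) (i j : ι) : ℝ := if (i ∈ S ↔ j ∈ S) then 0 else 1

@[simp] lemma cutSemimetric_self (S : Set ι) (i : ι) : cutSemimetric S i i = 0 := by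
  simp [cutSemimetric]

lemma sum_mul_cutSemimetric {κ : Type*} [Fintype κ] (S : κ → Set ι)
    [∀ k, DecidablePred (· ∈ S k)] (w : κ → ℝ) (i j : ι) :
    ∑ k, w k * cutSemimetric (S k) i j
      = ∑ k, (if i ∈ S k then w k else 0) + ∑ k, (if j ∈ S k then w k else 0)
        - 2 * ∑ k, (if i ∈ S k ∧ j ∈ S k then w k else 0) := by
  rw [mul_sum, ← sum_add_distrib, ← sum_sub_distrib]
  refine Fintype.sum_congr _ _ fun k => ?_
  by_cases hi : i ∈ S k <;> by_cases hj : j ∈ S k <;> simp [cutSemimetric, hi, hj, two_mul]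

theorem exists_mem_toriProduct_dist_sq_eq_sum_cutSemimetric {κ : Type*} [Fintype κ] {m : ℕ}
    (hm : 2 ≤ m) (S : κ → Set ι) (w : κ → ℝ) (hw : ∀ k, 0 < w k) :
    ∃ (N : ℕ) (T : Fin N → Set (EuclideanSpace ℝ (Fin 2))) (r : Fin N → ℝ),
      (∀ q, IsRegularPolygon m (r q) (T q)) ∧
      ∃ f : ι → EuclideanSpace ℝ (Fin N × Fin 2),
        (∀ i, f i ∈ toriProduct T) ∧
        ∀ i j, dist (f i) (f j) ^ 2 = ∑ k, w k * cutSemimetric (S k) i j := by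
  choose r hr hdist using fun k => exists_radius_dist_polygonVertex_zero_one_sq hm (hw k) 0 0
  let e := (Fintype.equivFin κ).symm
  let vertex (i : ι) (k : κ) := polygonVertex 0 (r k) 0 m (if i ∈ S k then 1 else 0)
  refine ⟨Fintype.card κ, fun q => {p | ∃ j < m, p = polygonVertex 0 (r (e q)) 0 m j},
    fun q => r (e q), fun q => ⟨hm, hr _, 0, 0, rfl⟩,
    fun i => WithLp.toLp 2 fun x => vertex i (e x.1) x.2, fun i q => ?_, fun i j => ?_⟩
  · exact ⟨if i ∈ S (e q) then 1 else 0, by split_ifs <;> omega, rfl⟩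
  have hcut : ∀ k, dist (vertex i k) (vertex j k) ^ 2 = w k * cutSemimetric (S k) i j := by
    intro k
    by_cases hi : i ∈ S k <;> by_cases hj : j ∈ S k <;>
      simp [vertex, cutSemimetric, hi, hj, hdist, dist_comm]
  rw [EuclideanSpace.dist_sq_eq_sum_dist_sq_curry, ← e.sum_comp]
  exact Fintype.sum_congr _ _ fun q => hcut (e q)

variable [Fintype ι]

lemma sum_ite_mem_pair (w : ι → ι → ℝ) (i : ι) :
    ∑ p : ι × ι, (if i ∈ ({p.1, p.2} : Set ι) then w p.1 p.2 else 0)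
      = ∑ b, w i b + ∑ a, w a i - w i i := by
  have hsplit : ∀ a b, (if i ∈ ({a, b} : Set ι) then w a b else 0)
      = (if i = a then w a b else 0) + (if i = b then w a b else 0)
        - (if i = a ∧ i = b then w a b else 0) := by
    intro a b
    by_cases ha : i = a <;> by_cases hb : i = b <;> simp [ha, hb]
  simp only [Fintype.sum_prod_type, hsplit, sum_add_distrib, sum_sub_distrib, ite_and]
  simp [sum_ite_eq]

lemma sum_ite_mem_pair_and_mem_pair (w : ι → ι → ℝ) {i j : ι} (hij : i ≠ j) :
    ∑ p : ι × ι, (if i ∈ ({p.1, p.2} : Set ι) ∧ j ∈ ({p.1, p.2} : Set ι) then w p.1 p.2 else 0)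
      = w i j + w j i := by
  have hsplit : ∀ a b, (if i ∈ ({a, b} : Set ι) ∧ j ∈ ({a, b} : Set ι) then w a b else 0)
      = (if i = a ∧ j = b then w a b else 0) + (if j = a ∧ i = b then w a b else 0) := by
    intro a b
    by_cases ha : i = a <;> by_cases hb : j = b <;> by_cases ha' : j = a <;>
      by_cases hb' : i = b <;> simp_all
  simp only [Fintype.sum_prod_type, hsplit, sum_add_distrib, ite_and]
  simp [sum_ite_eq]

lemma sum_mul_cutSemimetric_pair (w : ι → ι → ℝ) (hw : ∀ a b, w a b = w b a) {i j : ι}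
    (hij : i ≠ j) :
    ∑ p : ι × ι, w p.1 p.2 * cutSemimetric {p.1, p.2} i j
      = (2 * ∑ b, w i b - w i i) + (2 * ∑ b, w j b - w j j) - 4 * w i j := by
  rw [sum_mul_cutSemimetric, sum_ite_mem_pair, sum_ite_mem_pair,
    sum_ite_mem_pair_and_mem_pair w hij, hw j i]
  have hcol : ∀ c, ∑ a, w a c = ∑ b, w c b := fun c => Fintype.sum_congr _ _ fun a => hw a c
  rw [hcol, hcol]
  ring

variable [LinearOrder ι] [LocallyFiniteOrderTop ι] [LocallyFiniteOrderBot ι]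

lemma sum_compl_singleton_le_sum_sum_Ioi {f : ι → ι → ℝ} (hf : ∀ i j, 0 ≤ f i j)
    (hsymm : ∀ i j, f i j = f j i) (a : ι) :
    ∑ k ∈ {a}ᶜ, f a k ≤ ∑ i, ∑ j ∈ Ioi i, f i j := by
  rw [← Ioi_disjUnion_Iio, sum_disjUnion, ← add_sum_erase _ _ (mem_univ a)]
  gcongr
  calc ∑ k ∈ Iio a, f a k ≤ ∑ i ∈ Iio a, ∑ j ∈ Ioi i, f i j := by
        gcongr with i hi
        rw [hsymm]
        exact single_le_sum (fun j _ => hf i j) (mem_Ioi.2 (mem_Iio.1 hi))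
    _ ≤ ∑ i ∈ univ.erase a, ∑ j ∈ Ioi i, f i j :=
        sum_le_sum_of_subset_of_nonneg
          (fun i hi => mem_erase.2 ⟨(mem_Iio.1 hi).ne, mem_univ i⟩)
          (fun i _ _ => sum_nonneg fun j _ => hf i j)

theorem exists_pos_weights_eq_sum_pair_cutSemimetric (D : ι → ι → ℝ) (β : ℝ)
    (hsymm : ∀ i j, D i j = D j i) (hdiag : ∀ i, D i i = 0) (hle : ∀ i j, D i j ≤ β)
    (hsum : ∑ i, ∑ j ∈ Ioi i, (β - D i j) < β) :
    ∃ w : ι × ι → ℝ, (∀ p, 0 < w p) ∧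
      ∀ i j, D i j = ∑ p : ι × ι, w p * cutSemimetric {p.1, p.2} i j := by
  set P := ∑ i, ∑ j ∈ Ioi i, (β - D i j)
  set ε := (β - P) / (Fintype.card ι + 1) with hε
  have hε0 : 0 < ε := div_pos (by linarith) (by positivity)
  -- Every point lies in cuts of total weight `(β + ε) / 2` and each pair `{i, j}` in cuts of
  -- total weight `(β + ε - D i j) / 2`, so by polarization the weighted cuts sum to `D`.
  let W (a b : ι) : ℝ :=
    if a = b then (β + ε - ∑ k ∈ {a}ᶜ, (β + ε - D a k)) / 2 else (β + ε - D a b) / 4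
  have hWsymm : ∀ a b, W a b = W b a := by
    intro a b
    by_cases hab : a = b
    · subst hab; rfl
    · simp only [W, if_neg hab, if_neg (Ne.symm hab), hsymm a b]
  have hrow : ∀ i, 2 * ∑ b, W i b - W i i = (β + ε) / 2 := by
    intro i
    rw [Fintype.sum_eq_add_sum_compl i,
      sum_congr rfl fun b hb => if_neg (by simpa [eq_comm] using hb), ← sum_div]
    simp only [W, if_pos rfl]
    ring
  refine ⟨fun p => W p.1 p.2, fun ⟨a, b⟩ => ?_, fun i j => ?_⟩
  · by_cases hab : a = b
    · subst hab
      have hrowsum : ∑ k ∈ {a}ᶜ, (β - D a k) ≤ P :=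
        sum_compl_singleton_le_sum_sum_Ioi (fun i j => sub_nonneg.2 (hle i j))
          (fun i j => by rw [hsymm]) a
      have hsplit : ∑ k ∈ {a}ᶜ, (β + ε - D a k) = ∑ k ∈ {a}ᶜ, (β - D a k) + ∑ k ∈ {a}ᶜ, ε := by
        rw [← sum_add_distrib]
        exact sum_congr rfl fun _ _ => by ring
      have hconst : Fintype.card ι * ε = ε + ∑ k ∈ {a}ᶜ, ε := by
        simpa using Fintype.sum_eq_add_sum_compl a fun _ => ε
      have hPε : (Fintype.card ι + 1) * ε = β - P := by
        rw [hε]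
        field_simp
      simp only [W, if_pos rfl, hsplit]
      linarith
    · simp only [W, if_neg hab]
      linarith [hle a b]
  · rcases eq_or_ne i j with rfl | hij
    · simp [hdiag]
    rw [sum_mul_cutSemimetric_pair W hWsymm hij, hrow, hrow]
    simp only [W, if_neg hij]
    ring

end Cuts

theorem almost_regular_simplex_embeds_into_m_regular_torus_general
    (n d : ℕ) (z : Fin n → EuclideanSpace ℝ (Fin d)) (αmax : ℝ)
    (hub : ∀ i j, dist (z i) (z j) ≤ αmax)
    (hsum : ∑ i : Fin n, ∑ j ∈ Finset.Ioi i,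
        (αmax ^ 2 - dist (z i) (z j) ^ 2) < αmax ^ 2)
    (m : ℕ) (hm : 2 ≤ m) :
    ∃ (N : ℕ) (T : Fin N → Set (EuclideanSpace ℝ (Fin 2))) (r : Fin N → ℝ),
      (∀ i, IsRegularPolygon m (r i) (T i)) ∧
      ∃ f : Fin n → EuclideanSpace ℝ (Fin N × Fin 2),
        (∀ i, f i ∈ toriProduct T) ∧
        ∀ i j, dist (f i) (f j) = dist (z i) (z j) := by
  obtain ⟨w, hw, hcut⟩ := exists_pos_weights_eq_sum_pair_cutSemimetric
    (fun i j => dist (z i) (z j) ^ 2) (αmax ^ 2) (fun i j => by rw [dist_comm]) (fun i => by simp)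
    (fun i j => pow_le_pow_left₀ dist_nonneg (hub i j) 2) hsum
  obtain ⟨N, T, r, hT, f, hf, hdist⟩ := exists_mem_toriProduct_dist_sq_eq_sum_cutSemimetric hm
    (fun p : Fin n × Fin n => ({p.1, p.2} : Set (Fin n))) w hw
  refine ⟨N, T, r, hT, f, hf, fun i j => ?_⟩
  rw [← pow_left_inj₀ dist_nonneg dist_nonneg two_ne_zero]
  exact (hdist i j).trans (hcut i j).symm

/-- Every almost regular simplex embeds, for every `m ≥ 2`, into an `m`-regular
polygonal torus (a finite product of regular `m`-gons, possibly of different radii). -/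
theorem almost_regular_simplex_embeds_into_m_regular_torus
    (n d : ℕ) (z : Fin n → EuclideanSpace ℝ (Fin d)) (αmax : ℝ)
    (hpos : ∀ i j, i ≠ j → 0 < dist (z i) (z j))
    (hub : ∀ i j, dist (z i) (z j) ≤ αmax)
    (hattained : ∃ i j, dist (z i) (z j) = αmax)
    (hsum : ∑ i : Fin n, ∑ j ∈ Finset.Ioi i,
        (αmax ^ 2 - dist (z i) (z j) ^ 2) < αmax ^ 2)
    (m : ℕ) (hm : 2 ≤ m) :
    ∃ (N : ℕ) (T : Fin N → Set (EuclideanSpace ℝ (Fin 2))) (r : Fin N → ℝ),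
      (∀ i, IsRegularPolygon m (r i) (T i)) ∧
      ∃ f : Fin n → EuclideanSpace ℝ (Fin N × Fin 2),
        (∀ i, f i ∈ toriProduct T) ∧
        ∀ i j, dist (f i) (f j) = dist (z i) (z j) :=
  almost_regular_simplex_embeds_into_m_regular_torus_general n d z αmax hub hsum m hm
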